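/- arXiv:2402.09496 — 3 statements merged into one kernel-verified Lean document; each statement's English description precedes it below -/
import Mathlib

section
/- Let P be a poset with |P| > 2 and T a 2-uniform tolerance on P. If (a,b) ∈ T, then a = b, or a is covered by b, or b is covered by a. -/
variable {P : Type*} [PartialOrder P]

/-- A tolerance on a poset: reflexive, symmetric, compatible with existing binary
joins and meets, and satisfying the two interpolation conditions (3) and (4). -/
def PosetTolerance (T : P → P → Prop) : Prop :=
  (∀ x, T x x) ∧ (∀ x y, T x y → T y x) ∧
  (∀ ⦃x y z u j k : P⦄, T x y → T z u → IsLUB {x, z} j → IsLUB {y, u} k → T j k) ∧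
  (∀ ⦃x y z u j k : P⦄, T x y → T z u → IsGLB {x, z} j → IsGLB {y, u} k → T j k) ∧
  ((∃ a b, ¬ T a b) → ∀ ⦃x y z : P⦄, T x y → T y z →
    ∃ u v, u ≤ x ∧ u ≤ y ∧ u ≤ z ∧ x ≤ v ∧ y ≤ v ∧ z ≤ v ∧ T u y ∧ T y v) ∧
  ((∃ a b, ¬ T a b) → ∀ ⦃x y : P⦄, T x y →
    ∃ z u, T z u ∧ z ≤ x ∧ z ≤ y ∧ x ≤ u ∧ y ≤ u ∧
      ∀ v, T v x → T v y → T v z ∧ T v u)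

/-- A block of `T`: a maximal subset `B` with `B × B ⊆ T`. -/
def IsBlock (T : P → P → Prop) (B : Set P) : Prop :=
  (∀ x ∈ B, ∀ y ∈ B, T x y) ∧ ∀ C : Set P, B ⊆ C → (∀ x ∈ C, ∀ y ∈ C, T x y) → C = B

/-- A 2-uniform tolerance: a tolerance all of whose blocks have exactly two elements. -/
def TwoUniform (T : P → P → Prop) : Prop :=
  PosetTolerance T ∧ ∀ B : Set P, IsBlock T B → ∃ a b : P, a ≠ b ∧ B = {a, b}

/-- `a` is a lower `T`-neighbor of `b` (and `b` an upper `T`-neighbor of `a`). -/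
def LowerNbr (T : P → P → Prop) (a b : P) : Prop := a ⋖ b ∧ T a b

/-- A `(T,S)`-top: an element with a lower `T`-neighbor and a lower `S`-neighbor
(equivalently, split or adherent `(T,S)`-top). -/
def TSTop (T S : P → P → Prop) (a : P) : Prop :=
  (∃ b, LowerNbr T b a) ∧ ∃ c, LowerNbr S c a

/-- A `(T,S)`-bottom, dually. -/
def TSBottom (T S : P → P → Prop) (a : P) : Prop :=
  (∃ b, LowerNbr T a b) ∧ ∃ c, LowerNbr S a c

/-- `T` and `S` permute: `T ∘ S = S ∘ T`. -/
def Permute (T S : P → P → Prop) : Prop :=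
  ∀ a b : P, (∃ c, T a c ∧ S c b) ↔ (∃ c, S a c ∧ T c b)

/-- Conditions (5)–(8): `T` and `S` are amicable. -/
def Amicable (T S : P → P → Prop) : Prop :=
  (∀ a b : P, a ≠ b → (∃ c, LowerNbr T c a ∧ LowerNbr S c b) →
    ∃ d, LowerNbr S a d ∧ LowerNbr T b d) ∧
  (∀ a b : P, a ≠ b → (∃ c, LowerNbr T a c ∧ LowerNbr S b c) →
    ∃ d, LowerNbr S d a ∧ LowerNbr T d b) ∧
  (∀ a b : P, TSTop T S a → (LowerNbr T a b ∨ LowerNbr S a b) → TSTop T S b) ∧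
  (∀ a b : P, TSBottom T S a → (LowerNbr T b a ∨ LowerNbr S b a) → TSBottom T S b)

lemma exists_block_aux (T : P → P → Prop) (hT : PosetTolerance T) {a b : P} (hab : T a b) :
    ∃ B : Set P, IsBlock T B ∧ a ∈ B ∧ b ∈ B := by
  obtain ⟨hrefl, hsymm, -⟩ := hT
  set S : Set (Set P) := {C | ∀ x ∈ C, ∀ y ∈ C, T x y} with hS
  have hab' : ({a, b} : Set P) ∈ S := by
    intro x hx y hy
    rcases hx with rfl | hx <;> rcases hy with rfl | hy <;>
      simp_all [hrefl, hsymm _ _ hab, hab]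
  have hub : ∀ c ⊆ S, IsChain (· ⊆ ·) c → c.Nonempty → ∃ ub ∈ S, ∀ s ∈ c, s ⊆ ub := by
    intro c hcS hchain hcne
    refine ⟨⋃₀ c, ?_, fun s hs => Set.subset_sUnion_of_mem hs⟩
    rintro x ⟨s, hs, hxs⟩ y ⟨t, ht, hyt⟩
    rcases hchain.total hs ht with h | h
    · exact hcS ht x (h hxs) y hyt
    · exact hcS hs x hxs y (h hyt)
  obtain ⟨m, hxm, hmS, hmax⟩ := zorn_subset_nonempty S hub _ hab'
  exact ⟨m, ⟨hmS, fun C hmC hC => subset_antisymm (hmax hC hmC) hmC⟩,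
    hxm (Set.mem_insert _ _), hxm (Set.mem_insert_iff.mpr (Or.inr rfl))⟩

lemma isGLB_pair_left' {a c : P} (h : a ≤ c) : IsGLB ({a, c} : Set P) a :=
  ⟨by rintro x (rfl | rfl); exacts [le_rfl, h], fun b hb => hb (Set.mem_insert _ _)⟩

lemma isGLB_pair_right' {a c : P} (h : c ≤ a) : IsGLB ({a, c} : Set P) c :=
  ⟨by rintro x (rfl | rfl); exacts [h, le_rfl], fun b hb => hb (by simp)⟩

lemma isLUB_pair_left' {a c : P} (h : c ≤ a) : IsLUB ({a, c} : Set P) a :=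
  ⟨by rintro x (rfl | rfl); exacts [le_rfl, h], fun b hb => hb (Set.mem_insert _ _)⟩

lemma isLUB_pair_right' {a c : P} (h : a ≤ c) : IsLUB ({a, c} : Set P) c :=
  ⟨by rintro x (rfl | rfl); exacts [h, le_rfl], fun b hb => hb (by simp)⟩


/-- Lemma 1(ii): distinct `T`-related elements form a covering pair. -/
theorem stmt_2 {P : Type*} [PartialOrder P] (T : P → P → Prop)
    (hP : ∃ x y z : P, x ≠ y ∧ x ≠ z ∧ y ≠ z) (hT : TwoUniform T)
    (a b : P) (hab : T a b) : a = b ∨ a ⋖ b ∨ b ⋖ a := by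
  by_cases hEq : a = b
  · exact Or.inl hEq
  obtain ⟨B, hB, haB, hbB⟩ := exists_block_aux T hT.1 hab
  obtain ⟨hTol, hBlk⟩ := hT
  obtain ⟨hrefl, hsymm, hlub, hglb, hint3, hint4⟩ := hTol
  -- T is not the full relation
  have hNe : ∃ x y : P, ¬ T x y := by
    by_contra h
    push_neg at h
    have huniv : IsBlock T Set.univ :=
      ⟨fun x _ y _ => h x y, fun C hC _ => Set.univ_subset_iff.mp hC⟩
    obtain ⟨x, y, hxy, heq⟩ := hBlk _ huniv
    obtain ⟨x0, y0, z0, h1, h2, h3⟩ := hP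
    have h0 : ∀ w : P, w = x ∨ w = y := fun w => by
      have hw : w ∈ ({x, y} : Set P) := by rw [← heq]; exact Set.mem_univ w
      simpa using hw
    rcases h0 x0 with rfl | rfl <;> rcases h0 y0 with rfl | rfl <;>
      rcases h0 z0 with rfl | rfl <;>
        first
          | exact h1 rfl
          | exact h2 rfl
          | exact h3 rfl
  -- B = {a, b}
  have hBab : B = {a, b} := by
    obtain ⟨x, y, hxy, hBe⟩ := hBlk B hB
    rw [hBe] at haB hbB ⊢
    simp only [Set.mem_insert_iff, Set.mem_singleton_iff] at haB hbB
    rcases haB with rfl | rfl <;> rcases hbB with rfl | rfl <;>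
      first
        | rfl
        | exact Set.pair_comm _ _
        | exact absurd rfl hEq
  -- anything T-related to both a and b is a or b
  have hIns : ∀ c, T a c → T b c → c = a ∨ c = b := by
    intro c h1 h2
    have hmem : ∀ y ∈ B, T c y := by
      intro y hy
      rw [hBab] at hy
      rcases hy with rfl | hy
      · exact hsymm _ _ h1
      · rw [Set.mem_singleton_iff] at hy; subst hy; exact hsymm _ _ h2
    have hpair : ∀ x ∈ insert c B, ∀ y ∈ insert c B, T x y := by
      intro x hx y hy
      rcases hx with rfl | hx <;> rcases hy with rfl | hy
      · exact hrefl _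
      · exact hmem y hy
      · exact hsymm _ _ (hmem x hx)
      · exact hB.1 x hx y hy
    have hc : c ∈ B := (hB.2 _ (Set.subset_insert c B) hpair) ▸ Set.mem_insert c B
    rw [hBab] at hc
    simpa using hc
  -- comparability
  obtain ⟨z, u, hzu, hza, hzb, hau, hbu, hforall⟩ := hint4 hNe hab
  have hza' : T a z := (hforall a (hrefl a) hab).1
  have hzb' : T b z := (hforall b (hsymm _ _ hab) (hrefl b)).1
  have hcomp : a ≤ b ∨ b ≤ a := by
    rcases hIns z hza' hzb' with rfl | rfl
    · exact Or.inl hzb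
    · exact Or.inr hza
  rcases hcomp with hle | hle
  · refine Or.inr (Or.inl ⟨lt_of_le_of_ne hle hEq, ?_⟩)
    intro c hac hcb
    have h1 : T a c := hglb hab (hrefl c) (isGLB_pair_left' hac.le) (isGLB_pair_right' hcb.le)
    have h2 : T c b := hlub hab (hrefl c) (isLUB_pair_right' hac.le) (isLUB_pair_left' hcb.le)
    rcases hIns c h1 (hsymm _ _ h2) with rfl | rfl
    · exact lt_irrefl _ hac
    · exact lt_irrefl _ hcb
  · refine Or.inr (Or.inr ⟨lt_of_le_of_ne hle (Ne.symm hEq), ?_⟩)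
    intro c hbc hca
    have hba := hsymm _ _ hab
    have h1 : T b c := hglb hba (hrefl c) (isGLB_pair_left' hbc.le) (isGLB_pair_right' hca.le)
    have h2 : T c a := hlub hba (hrefl c) (isLUB_pair_right' hbc.le) (isLUB_pair_left' hca.le)
    rcases hIns c (hsymm _ _ h2) h1 with rfl | rfl
    · exact lt_irrefl _ hca
    · exact lt_irrefl _ hbc
end

section
/- Let T and S be 2-uniform tolerances on a poset P (|P| > 2) that permute. If a is a (T,S)-top and b is an upper T-neighbor or an upper S-neighbor of a, then b is a (T,S)-top as well. -/
variable {P : Type*} [PartialOrder P]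

omit [PartialOrder P] in
lemma exists_block_containing (T : P → P → Prop) {C : Set P}
    (hC : ∀ x ∈ C, ∀ y ∈ C, T x y) : ∃ B, IsBlock T B ∧ C ⊆ B := by
  obtain ⟨B, hCB, hmax⟩ := zorn_subset_nonempty {D : Set P | ∀ x ∈ D, ∀ y ∈ D, T x y}
    (fun c hc hchain _ => by
      refine ⟨⋃₀ c, ?_, fun s hs => Set.subset_sUnion_of_mem hs⟩
      rintro x ⟨D1, hD1, hx⟩ y ⟨D2, hD2, hy⟩
      rcases hchain.total hD1 hD2 with h | h
      · exact hc hD2 x (h hx) y hy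
      · exact hc hD1 x hx y (h hy)) C hC
  exact ⟨B, ⟨hmax.1, fun D hBD hD => (hmax.2 hD hBD).antisymm hBD⟩, hCB⟩

lemma clique3 {T : P → P → Prop} (hT : TwoUniform T) {x y z : P}
    (hxy : T x y) (hyz : T y z) (hxz : T x z) : x = y ∨ x = z ∨ y = z := by
  obtain ⟨hrefl, hsym, -⟩ := hT.1
  by_contra h
  push_neg at h
  obtain ⟨hxy', hxz', hyz'⟩ := h
  have hC : ∀ p ∈ ({x, y, z} : Set P), ∀ q ∈ ({x, y, z} : Set P), T p q := by
    rintro p (rfl | rfl | rfl) q (rfl | rfl | rfl) <;>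
      first | exact hrefl _ | assumption | exact hsym _ _ hxy |
        exact hsym _ _ hyz | exact hsym _ _ hxz
  obtain ⟨B, hB, hCB⟩ := exists_block_containing T hC
  obtain ⟨a, b, -, rfl⟩ := hT.2 B hB
  have hx := hCB (show x ∈ ({x, y, z} : Set P) by simp)
  have hy := hCB (show y ∈ ({x, y, z} : Set P) by simp)
  have hz := hCB (show z ∈ ({x, y, z} : Set P) by simp)
  simp only [Set.mem_insert_iff, Set.mem_singleton_iff] at hx hy hz
  rcases hx with rfl | rfl <;> rcases hy with rfl | rfl <;> rcases hz with rfl | rfl <;>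
    simp_all

lemma lub_of_le {x y : P} (h : x ≤ y) : IsLUB ({x, y} : Set P) y :=
  ⟨by rintro p (rfl | rfl) <;> simp [h], fun p hp => hp (by simp)⟩

lemma lub_of_ge {x y : P} (h : y ≤ x) : IsLUB ({x, y} : Set P) x :=
  ⟨by rintro p (rfl | rfl) <;> simp [h], fun p hp => hp (by simp)⟩

lemma glb_of_le {x y : P} (h : x ≤ y) : IsGLB ({x, y} : Set P) x :=
  ⟨by rintro p (rfl | rfl) <;> simp [h], fun p hp => hp (by simp)⟩

lemma glb_of_ge {x y : P} (h : y ≤ x) : IsGLB ({x, y} : Set P) y :=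
  ⟨by rintro p (rfl | rfl) <;> simp [h], fun p hp => hp (by simp)⟩

lemma notfull {T : P → P → Prop} (hT : TwoUniform T)
    (hP : ∃ x y z : P, x ≠ y ∧ x ≠ z ∧ y ≠ z) : ∃ a b, ¬ T a b := by
  by_contra h
  push_neg at h
  obtain ⟨x, y, z, hxy, hxz, hyz⟩ := hP
  rcases clique3 hT (h x y) (h y z) (h x z) with h' | h' | h' <;> tauto

lemma covers {T : P → P → Prop} (hT : TwoUniform T)
    (hP : ∃ x y z : P, x ≠ y ∧ x ≠ z ∧ y ≠ z) {x y : P}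
    (hxy : T x y) (hne : x ≠ y) : x ⋖ y ∨ y ⋖ x := by
  obtain ⟨hrefl, hsym, hjoin, hmeet, _, h4⟩ := hT.1
  obtain ⟨z, u, hzu, hzx, hzy, hxu, hyu, hv⟩ := h4 (notfull hT hP) hxy
  have hx := hv x (hrefl x) hxy
  have hy := hv y (hsym _ _ hxy) (hrefl y)
  -- comparability
  have hcomp : x < y ∨ y < x := by
    rcases clique3 hT hxy hy.1 hx.1 with h' | h' | h'
    · exact absurd h' hne
    · exact Or.inl (lt_of_le_of_ne (h' ▸ hzy) hne)
    · exact Or.inr (lt_of_le_of_ne (h' ▸ hzx) (Ne.symm hne))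
  -- covering given strict inequality
  have key : ∀ p q : P, T p q → p < q → p ⋖ q := by
    intro p q hpq hlt
    refine ⟨hlt, fun w hpw hwq => ?_⟩
    have h1 : T w q := hjoin hpq (hrefl w) (lub_of_le hpw.le) (lub_of_ge hwq.le)
    have h2 : T p w := hmeet hpq (hrefl w) (glb_of_le hpw.le) (glb_of_ge hwq.le)
    rcases clique3 hT h2 h1 hpq with h' | h' | h'
    · exact hpw.ne h'
    · exact hlt.ne h'
    · exact hwq.ne h'
  rcases hcomp with h' | h'
  · exact Or.inl (key _ _ hxy h')
  · exact Or.inr (key _ _ (hsym _ _ hxy) h')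


lemma find_lower {T S : P → P → Prop} (hT : TwoUniform T) (hS : TwoUniform S)
    (hP : ∃ x y z : P, x ≠ y ∧ x ≠ z ∧ y ≠ z) {s a b c : P}
    (hsa : s ⋖ a) (hab : a ⋖ b) (h1 : T s c) (h2 : S c b) : LowerNbr S c b := by
  have hsb : s < b := hsa.lt.trans hab.lt
  have hcb : c ≠ b := by
    rintro rfl
    rcases covers hT hP h1 hsb.ne with h | h
    · exact h.2 hsa.lt hab.lt
    · exact absurd hsb.le h.lt.not_ge
  rcases covers hS hP h2 hcb with h | h
  · exact ⟨h, h2⟩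
  · exfalso
    have hsc : s < c := hsb.trans h.lt
    rcases covers hT hP h1 hsc.ne with h' | h'
    · exact h'.2 hsa.lt (hab.lt.trans h.lt)
    · exact absurd hsc.le h'.lt.not_ge


/-- Condition (7) for permuting 2-uniform tolerances. -/
theorem stmt_5 {P : Type*} [PartialOrder P] (T S : P → P → Prop)
    (hP : ∃ x y z : P, x ≠ y ∧ x ≠ z ∧ y ≠ z)
    (hT : TwoUniform T) (hS : TwoUniform S) (hperm : Permute T S)
    (a b : P) (ha : TSTop T S a) (hb : LowerNbr T a b ∨ LowerNbr S a b) :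
    TSTop T S b := by
  obtain ⟨⟨t, hta, hTta⟩, ⟨s, hsa, hSsa⟩⟩ := ha
  rcases hb with ⟨hab, hTab⟩ | ⟨hab, hSab⟩
  · obtain ⟨c, h1, h2⟩ := (hperm s b).mpr ⟨a, hSsa, hTab⟩
    exact ⟨⟨a, hab, hTab⟩, ⟨c, find_lower hT hS hP hsa hab h1 h2⟩⟩
  · obtain ⟨c, h1, h2⟩ := (hperm t b).mp ⟨a, hTta, hSab⟩
    exact ⟨⟨c, find_lower hS hT hP hta hab h1 h2⟩, ⟨a, hab, hSab⟩⟩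
end

section
/- Let T and S be 2-uniform tolerances on a poset P (|P| > 2). If T and S permute then they are amicable, i.e., conditions (5)–(8) hold: (5) if a ≠ b and some c is a lower T-neighbor of a and lower S-neighbor of b, then some d is an upper S-neighbor of a and upper T-neighbor of b; (6) dually with upper and lower interchanged; (7) if a is a (T,S)-top and b is an upper T- or S-neighbor of a, then b is a (T,S)-top; (8) dually for bottoms. -/
variable {P : Type*} [PartialOrder P]

section Aux
variable {T : P → P → Prop}

lemma exists_block (hrefl : ∀ x, T x x) {B : Set P} (hB : ∀ x ∈ B, ∀ y ∈ B, T x y) :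
    ∃ C, B ⊆ C ∧ IsBlock T C := by
  obtain ⟨m, hBm, hmS, hmax⟩ := zorn_subset_nonempty {C : Set P | ∀ x ∈ C, ∀ y ∈ C, T x y}
    (fun c hcS hc _ => ⟨⋃₀ c, by
      intro x hx y hy
      obtain ⟨s, hs, hxs⟩ := hx
      obtain ⟨t, ht, hyt⟩ := hy
      rcases hc.total hs ht with h | h
      · exact hcS ht _ (h hxs) _ hyt
      · exact hcS hs _ hxs _ (h hyt), fun s hs => Set.subset_sUnion_of_mem hs⟩) B hB
  exact ⟨m, hBm, hmS, fun C hmC hC => le_antisymm (hmax hC hmC) hmC⟩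

lemma no_three (hT : TwoUniform T) {x y z : P} (hxy : x ≠ y) (hxz : x ≠ z) (hyz : y ≠ z)
    (txy : T x y) (txz : T x z) (tyz : T y z) : False := by
  obtain ⟨⟨hrefl, hsymm, _⟩, hblk⟩ := hT
  have hcl : ∀ a ∈ ({x, y, z} : Set P), ∀ b ∈ ({x, y, z} : Set P), T a b := by
    intro a ha b hb
    simp only [Set.mem_insert_iff, Set.mem_singleton_iff] at ha hb
    rcases ha with rfl | rfl | rfl <;> rcases hb with rfl | rfl | rfl <;>
      first | exact hrefl _ | assumption | exact hsymm _ _ ‹_›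
  obtain ⟨C, hBC, hCblk⟩ := exists_block hrefl hcl
  obtain ⟨a, b, hab, rfl⟩ := hblk C hCblk
  have hx : x ∈ ({a, b} : Set P) := hBC (by simp)
  have hy : y ∈ ({a, b} : Set P) := hBC (by simp)
  have hz : z ∈ ({a, b} : Set P) := hBC (by simp)
  simp only [Set.mem_insert_iff, Set.mem_singleton_iff] at hx hy hz
  clear hcl hBC hCblk
  rcases hx with rfl | rfl <;> rcases hy with rfl | rfl <;> rcases hz with rfl | rfl <;>
    first | exact hxy rfl | exact hxz rfl | exact hyz rfl

lemma not_total (hT : TwoUniform T) (hP : ∃ x y z : P, x ≠ y ∧ x ≠ z ∧ y ≠ z) :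
    ∃ a b, ¬ T a b := by
  by_contra h
  push_neg at h
  obtain ⟨x, y, z, hxy, hxz, hyz⟩ := hP
  exact no_three hT hxy hxz hyz (h x y) (h x z) (h y z)

lemma isLUB_pair_of_le {x w : P} (h : x ≤ w) : IsLUB ({x, w} : Set P) w :=
  ⟨by rintro a (rfl | rfl); exacts [h, le_rfl], fun b hb => hb (by simp)⟩

lemma isLUB_pair_of_ge {x w : P} (h : w ≤ x) : IsLUB ({x, w} : Set P) x :=
  ⟨by rintro a (rfl | rfl); exacts [le_rfl, h], fun b hb => hb (by simp)⟩

lemma isGLB_pair_of_ge {x w : P} (h : w ≤ x) : IsGLB ({x, w} : Set P) w :=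
  ⟨by rintro a (rfl | rfl); exacts [h, le_rfl], fun b hb => hb (by simp)⟩

lemma isGLB_pair_of_le {x w : P} (h : x ≤ w) : IsGLB ({x, w} : Set P) x :=
  ⟨by rintro a (rfl | rfl); exacts [le_rfl, h], fun b hb => hb (by simp)⟩

lemma covby_of_lt (hT : TwoUniform T) {x y : P} (txy : T x y) (hlt : x < y) : x ⋖ y := by
  refine ⟨hlt, fun w hxw hwy => ?_⟩
  have hTwy : T w y := hT.1.2.2.1 txy (hT.1.1 w) (isLUB_pair_of_le hxw.le) (isLUB_pair_of_ge hwy.le)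
  have hTxw : T x w := hT.1.2.2.2.1 txy (hT.1.1 w) (isGLB_pair_of_le hxw.le) (isGLB_pair_of_ge hwy.le)
  exact no_three hT hxw.ne (hxw.trans hwy).ne hwy.ne hTxw txy hTwy

lemma comparable (hT : TwoUniform T) (hne : ∃ a b, ¬ T a b) {x y : P} (txy : T x y)
    (h : x ≠ y) : x ⋖ y ∨ y ⋖ x := by
  obtain ⟨z, u, tzu, hzx, hzy, hxu, hyu, hv⟩ := hT.1.2.2.2.2.2 hne txy
  obtain ⟨txz, txu⟩ := hv x (hT.1.1 x) txy
  obtain ⟨tyz, tyu⟩ := hv y (hT.1.2.1 _ _ txy) (hT.1.1 y)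
  have hzu : z ≠ u := by
    rintro rfl
    exact h (le_antisymm (le_trans hxu hzy) (le_trans hyu hzx)) |>.elim
  have hx : x = z ∨ x = u := by
    by_contra hc
    push_neg at hc
    exact no_three hT hc.1 hc.2 hzu txz txu tzu
  have hy : y = z ∨ y = u := by
    by_contra hc
    push_neg at hc
    exact no_three hT hc.1 hc.2 hzu tyz tyu tzu
  rcases hx with rfl | rfl
  · rcases hy with rfl | rfl
    · exact absurd rfl h
    · exact Or.inl (covby_of_lt hT txy (lt_of_le_of_ne hzy h))
  · rcases hy with rfl | rfl
    · exact Or.inr (covby_of_lt hT (hT.1.2.1 _ _ txy) (lt_of_le_of_ne hyu (Ne.symm h)))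
    · exact absurd rfl h

lemma lower_unique (hT : TwoUniform T) (hne : ∃ a b, ¬ T a b) {a b x : P}
    (ha : a ⋖ x) (hta : T a x) (hb : b ⋖ x) (htb : T b x) : a = b := by
  obtain ⟨u, v, hua, hux, hub, -, -, -, hTux, -⟩ :=
    hT.1.2.2.2.2.1 hne hta (hT.1.2.1 _ _ htb)
  have hux' : u < x := lt_of_le_of_lt hua ha.lt
  have hcov : u ⋖ x := by
    rcases comparable hT hne hTux hux'.ne with h | h
    · exact h
    · exact absurd h.lt (asymm hux')
  have h1 : u = a := by
    rcases eq_or_lt_of_le hua with h | h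
    · exact h
    · exact absurd ha.lt (hcov.2 h)
  have h2 : u = b := by
    rcases eq_or_lt_of_le hub with h | h
    · exact h
    · exact absurd hb.lt (hcov.2 h)
  exact h1 ▸ h2

lemma upper_unique (hT : TwoUniform T) (hne : ∃ a b, ¬ T a b) {a b x : P}
    (ha : x ⋖ a) (hta : T x a) (hb : x ⋖ b) (htb : T x b) : a = b := by
  obtain ⟨u, v, -, -, -, hav, hxv, hbv, -, hTxv⟩ :=
    hT.1.2.2.2.2.1 hne (hT.1.2.1 _ _ hta) htb
  have hxv' : x < v := lt_of_lt_of_le ha.lt hav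
  have hcov : x ⋖ v := by
    rcases comparable hT hne hTxv hxv'.ne with h | h
    · exact h
    · exact absurd h.lt (asymm hxv')
  have h1 : a = v := by
    rcases eq_or_lt_of_le hav with h | h
    · exact h
    · exact absurd h (hcov.2 ha.lt)
  have h2 : b = v := by
    rcases eq_or_lt_of_le hbv with h | h
    · exact h
    · exact absurd h (hcov.2 hb.lt)
  exact h1 ▸ h2.symm

end Aux

/-- Permuting 2-uniform tolerances are amicable. -/
theorem stmt_6 {P : Type*} [PartialOrder P] (T S : P → P → Prop)
    (hP : ∃ x y z : P, x ≠ y ∧ x ≠ z ∧ y ≠ z)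
    (hT : TwoUniform T) (hS : TwoUniform S) (hperm : Permute T S) :
    Amicable T S := by
  have hneT : ∃ a b, ¬ T a b := not_total hT hP
  have hneS : ∃ a b, ¬ S a b := not_total hS hP
  have symmT : ∀ x y, T x y → T y x := hT.1.2.1
  have symmS : ∀ x y, S x y → S y x := hS.1.2.1
  refine ⟨?_, ?_, ?_, ?_⟩
  · -- (5)
    rintro a b hab ⟨c, ⟨hca, tca⟩, ⟨hcb, scb⟩⟩
    obtain ⟨d, sad, tdb⟩ := (hperm a b).mp ⟨c, symmT _ _ tca, scb⟩
    have hda : d ≠ a := by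
      rintro rfl
      rcases comparable hT hneT tdb hab with h | h
      · exact hcb.2 hca.lt h.lt
      · exact hca.2 hcb.lt h.lt
    have hdb : d ≠ b := by
      rintro rfl
      rcases comparable hS hneS sad hab with h | h
      · exact hcb.2 hca.lt h.lt
      · exact hca.2 hcb.lt h.lt
    rcases comparable hS hneS sad (Ne.symm hda) with h1 | h1
    · -- a ⋖ d
      rcases comparable hT hneT tdb hdb with h2 | h2
      · -- d ⋖ b : contradiction
        exact absurd (h1.lt.trans h2.lt) (hcb.2 hca.lt)
      · -- b ⋖ d : done
        exact ⟨d, ⟨h1, sad⟩, ⟨h2, symmT _ _ tdb⟩⟩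
    · -- d ⋖ a
      exfalso
      rcases comparable hT hneT tdb hdb with h2 | h2
      · -- d ⋖ b
        have scd : S c d := hS.1.2.2.2.1 sad scb (isGLB_pair_of_ge hca.lt.le)
          (isGLB_pair_of_le h2.lt.le)
        by_cases hcd : c = d
        · subst hcd
          exact hab (upper_unique hT hneT hca tca hcb tdb)
        · rcases comparable hS hneS scd hcd with h | h
          · exact hca.2 h.lt h1.lt
          · exact h2.2 h.lt hcb.lt
      · -- b ⋖ d
        exact hca.2 hcb.lt (h2.lt.trans h1.lt)
  · -- (6)
    rintro a b hab ⟨c, ⟨hac, tac⟩, ⟨hbc, sbc⟩⟩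
    obtain ⟨d, sad, tdb⟩ := (hperm a b).mp ⟨c, tac, symmS _ _ sbc⟩
    have hda : d ≠ a := by
      rintro rfl
      rcases comparable hT hneT tdb hab with h | h
      · exact hbc.ne (upper_unique hT hneT hac tac h tdb).symm
      · exact hbc.2 h.lt hac.lt
    have hdb : d ≠ b := by
      rintro rfl
      rcases comparable hS hneS sad hab with h | h
      · exact hac.2 h.lt hbc.lt
      · exact hbc.2 h.lt hac.lt
    rcases comparable hS hneS sad (Ne.symm hda) with h1 | h1
    · -- a ⋖ d : contradiction
      exfalso
      rcases comparable hT hneT tdb hdb with h2 | h2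
      · -- d ⋖ b
        exact hac.2 h1.lt (h2.lt.trans hbc.lt)
      · -- b ⋖ d
        have scd : S c d := hS.1.2.2.1 sad (symmS _ _ sbc) (isLUB_pair_of_le hac.lt.le)
          (isLUB_pair_of_ge h2.lt.le)
        by_cases hcd : c = d
        · subst hcd
          exact hab (lower_unique hT hneT hac tac h2 (symmT c b tdb))
        · rcases comparable hS hneS scd hcd with h | h
          · exact h1.2 hac.lt h.lt
          · exact hbc.2 h2.lt h.lt
    · -- d ⋖ a
      rcases comparable hT hneT tdb hdb with h2 | h2
      · -- d ⋖ b : done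
        exact ⟨d, ⟨h1, symmS _ _ sad⟩, ⟨h2, tdb⟩⟩
      · -- b ⋖ d : contradiction
        exact absurd (h1.lt.trans hac.lt) (hbc.2 h2.lt)
  · -- (7)
    rintro a b ⟨⟨p, hpa, tpa⟩, ⟨q, hqa, sqa⟩⟩ hb
    rcases hb with ⟨hab, tab⟩ | ⟨hab, sab⟩
    · refine ⟨⟨a, hab, tab⟩, ?_⟩
      obtain ⟨e, tqe, seb⟩ := (hperm q b).mpr ⟨a, sqa, tab⟩
      have hqb : q < b := hqa.lt.trans hab.lt
      have heb : e ≠ b := by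
        rintro rfl
        rcases comparable hT hneT tqe hqb.ne with h | h
        · exact h.2 hqa.lt hab.lt
        · exact absurd h.lt (asymm hqb)
      rcases comparable hS hneS seb heb with h | h
      · exact ⟨e, h, seb⟩
      · exfalso
        have hqe : q < e := hqb.trans h.lt
        rcases comparable hT hneT tqe hqe.ne with h' | h'
        · exact h'.2 hqa.lt (hab.lt.trans h.lt)
        · exact absurd h'.lt (asymm hqe)
    · refine ⟨?_, ⟨a, hab, sab⟩⟩
      obtain ⟨e, spe, teb⟩ := (hperm p b).mp ⟨a, tpa, sab⟩
      have hpb : p < b := hpa.lt.trans hab.lt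
      have heb : e ≠ b := by
        rintro rfl
        rcases comparable hS hneS spe hpb.ne with h | h
        · exact h.2 hpa.lt hab.lt
        · exact absurd h.lt (asymm hpb)
      rcases comparable hT hneT teb heb with h | h
      · exact ⟨e, h, teb⟩
      · exfalso
        have hpe : p < e := hpb.trans h.lt
        rcases comparable hS hneS spe hpe.ne with h' | h'
        · exact h'.2 hpa.lt (hab.lt.trans h.lt)
        · exact absurd h'.lt (asymm hpe)
  · -- (8)
    rintro a b ⟨⟨p, hap, tap⟩, ⟨q, haq, saq⟩⟩ hb
    rcases hb with ⟨hba, tba⟩ | ⟨hba, sba⟩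
    · refine ⟨⟨a, hba, tba⟩, ?_⟩
      obtain ⟨e, sbe, teq⟩ := (hperm b q).mp ⟨a, tba, saq⟩
      have hbq : b < q := hba.lt.trans haq.lt
      have hbe : b ≠ e := by
        rintro h; subst h
        rcases comparable hT hneT teq hbq.ne with h | h
        · exact h.2 hba.lt haq.lt
        · exact absurd h.lt (asymm hbq)
      rcases comparable hS hneS sbe hbe with h | h
      · exact ⟨e, h, sbe⟩
      · exfalso
        have heq : e < q := h.lt.trans hbq
        rcases comparable hT hneT teq heq.ne with h' | h'
        · exact h'.2 (h.lt.trans hba.lt) haq.lt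
        · exact absurd h'.lt (asymm heq)
    · refine ⟨?_, ⟨a, hba, sba⟩⟩
      obtain ⟨e, tbe, sep⟩ := (hperm b p).mpr ⟨a, sba, tap⟩
      have hbp : b < p := hba.lt.trans hap.lt
      have hbe : b ≠ e := by
        rintro h; subst h
        rcases comparable hS hneS sep hbp.ne with h | h
        · exact h.2 hba.lt hap.lt
        · exact absurd h.lt (asymm hbp)
      rcases comparable hT hneT tbe hbe with h | h
      · exact ⟨e, h, tbe⟩
      · exfalso
        have hep : e < p := h.lt.trans hbp
        rcases comparable hS hneS sep hep.ne with h' | h'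
        · exact h'.2 (h.lt.trans hba.lt) hap.lt
        · exact absurd h'.lt (asymm hep)
end
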